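/- Let 𝒢 = {G_1,...,G_k} be a consistent set of rooted binary trees with union of leaf sets Γ, |Γ| > 1, and let S be a rooted binary species tree. Then the minimum LCA-reconciliation cost MinSGT(G_1,...,G_k) over all supertrees of 𝒢 satisfies the recurrence: MinSGT(G_1,...,G_k) = min over compatible bipartitions (L_l, L_r) ∈ ℬ(G_1,...,G_k) of [ cost(L_l, L_r) + MinSGT(G_1|_{L_l},...,G_k|_{L_l}) + MinSGT(G_1|_{L_r},...,G_k|_{L_r}) ], with base case 0 when |Γ| = 1. -/
import Mathlib


inductive BTree (α : Type) where
  | leaf : α → BTree α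
  | node : BTree α → BTree α → BTree α
deriving DecidableEq

namespace BTree

variable {α : Type} [DecidableEq α] {σ : Type} [DecidableEq σ] {γ : Type} [DecidableEq γ]

/-- leaf (label) set of a tree -/
def leaves : BTree α → Finset α
  | leaf a => {a}
  | node l r => leaves l ∪ leaves r

/-- the leaf labels are pairwise distinct -/
def nodupLeaves : BTree α → Prop
  | leaf _ => True
  | node l r => nodupLeaves l ∧ nodupLeaves r ∧ Disjoint (leaves l) (leaves r)

/-- the (unordered) bipartition `(Ll, Lr)` is compatible with the tree:
the whole leaf set lies in one part, or the leaf sets of the two root child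
subtrees lie in opposite parts. -/
def compatible : BTree α → Finset α → Finset α → Prop
  | leaf a, Ll, Lr => a ∈ Ll ∨ a ∈ Lr
  | node l r, Ll, Lr =>
      leaves l ∪ leaves r ⊆ Ll ∨ leaves l ∪ leaves r ⊆ Lr ∨
      (leaves l ⊆ Ll ∧ leaves r ⊆ Lr) ∨ (leaves l ⊆ Lr ∧ leaves r ⊆ Ll)

/-- union of the leaf sets of a list of trees -/
def unionLeaves (Gs : List (BTree α)) : Finset α :=
  Gs.foldr (fun g acc => leaves g ∪ acc) ∅

/-- `(Ll, Lr)` is a bipartition of the union of the leaf sets (both parts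
nonempty) compatible with every tree in the list. -/
def isCompBip (Gs : List (BTree α)) (Ll Lr : Finset α) : Prop :=
  Ll ∪ Lr = unionLeaves Gs ∧ Disjoint Ll Lr ∧ Ll.Nonempty ∧ Lr.Nonempty ∧
    ∀ G ∈ Gs, compatible G Ll Lr

/-- restriction `G|_L` : remove the leaves not in `L` and suppress the
resulting degree-2 nodes; `none` if no leaf of `G` lies in `L`. -/
def restrict : BTree α → Finset α → Option (BTree α)
  | leaf a, L => if a ∈ L then some (leaf a) else none
  | node l r, L =>
      match restrict l L, restrict r L with
      | some l', some r' => some (node l' r')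
      | some l', none => some l'
      | none, some r' => some r'
      | none, none => none

/-- isomorphism of rooted leaf-labeled trees (children are unordered) -/
inductive Iso : BTree α → BTree α → Prop
  | leaf (a : α) : Iso (leaf a) (leaf a)
  | node {l r l' r' : BTree α} : Iso l l' → Iso r r' → Iso (node l r) (node l' r')
  | swap {l r l' r' : BTree α} : Iso l r' → Iso r l' → Iso (node l r) (node l' r')

/-- `G` displays `G'` : the restriction of `G` to the leaves of `G'` is
isomorphic to `G'` (preserving leaf labels). -/
def displays (G G' : BTree α) : Prop :=
  ∃ t, restrict G (leaves G') = some t ∧ Iso t G'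

/-- `Subtree t T` : `t` is a complete rooted subtree of `T` (i.e. `t = T[x]`
for some node `x` of `T`).  Equivalently, the root of `T` is a (weak)
ancestor of the root of `t`. -/
inductive Subtree : BTree α → BTree α → Prop
  | refl (t : BTree α) : Subtree t t
  | left {t l r : BTree α} : Subtree t l → Subtree t (node l r)
  | right {t l r : BTree α} : Subtree t r → Subtree t (node l r)

/-- two nodes (complete subtrees) are separated: neither is a (weak)
ancestor of the other -/
def separated (u v : BTree α) : Prop := ¬ Subtree u v ∧ ¬ Subtree v u

/-- the subtree rooted at the lowest common ancestor of the leaf set `L` -/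
def lcaSub : BTree α → Finset α → BTree α
  | leaf a, _ => leaf a
  | node l r, L =>
      if L ⊆ leaves l then lcaSub l L
      else if L ⊆ leaves r then lcaSub r L
      else node l r

/-- `T1` and `T2` induce the same rooted triplet topology on `{a, b, c}` -/
def sameTriplet (T1 T2 : BTree α) (a b c : α) : Prop :=
  ∃ t1 t2, restrict T1 {a, b, c} = some t1 ∧ restrict T2 {a, b, c} = some t2 ∧ Iso t1 t2

/-- `GTR` is triplet respecting w.r.t. `GInit` and the family `Gs` : for any
three leaves taken from three distinct trees of `Gs`, `GInit` and `GTR`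
induce the same rooted triplet topology. -/
def tripletRespecting (GInit GTR : BTree α) (Gs : List (BTree α)) : Prop :=
  ∀ G1 ∈ Gs, ∀ G2 ∈ Gs, ∀ G3 ∈ Gs, G1 ≠ G2 → G1 ≠ G3 → G2 ≠ G3 →
    ∀ a ∈ leaves G1, ∀ b ∈ leaves G2, ∀ c ∈ leaves G3, sameTriplet GInit GTR a b c

/-- at least two (distinct) trees of `Gs` are subtrees of `t` : `|𝒢(t)| ≥ 2` -/
def atLeastTwo (Gs : List (BTree α)) (t : BTree α) : Prop :=
  ∃ Gi ∈ Gs, ∃ Gj ∈ Gs, Gi ≠ Gj ∧ Subtree Gi t ∧ Subtree Gj t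

/-- `Graft T' T R` : `R` is obtained from `T` by grafting `T'` at some node
`x*` of `T`, i.e. subdividing the edge above `x*` (or adding a new root if
`x*` is the root) and attaching `T'` as the new sibling of `x*`. -/
inductive Graft (T' : BTree α) : BTree α → BTree α → Prop
  | atRootL (T : BTree α) : Graft T' T (node T' T)
  | atRootR (T : BTree α) : Graft T' T (node T T')
  | left {l r g : BTree α} : Graft T' l g → Graft T' (node l r) (node g r)
  | right {l r g : BTree α} : Graft T' r g → Graft T' (node l r) (node l g)

/-- number of edges from the root of `u` down to the node `v`, if `v` is a
node (complete subtree) of `u` -/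
def edist : BTree σ → BTree σ → Option ℕ
  | leaf a, v => if leaf a = v then some 0 else none
  | node l r, v =>
      if node l r = v then some 0 else
      match edist l v, edist r v with
      | some n, _ => some (n + 1)
      | none, some n => some (n + 1)
      | none, none => none

/-- number of nodes strictly between an ancestor `u` and a descendant `v` -/
def inter (u v : BTree σ) : ℕ := (edist u v).getD 1 - 1

/-- node (`lca`) of the species tree `S` associated to a set `L` of genes -/
def specOf (S : BTree σ) (s : γ → σ) (L : Finset γ) : BTree σ := lcaSub S (L.image s)

/-- the species-tree node `s(x)` associated with a gene-tree node `x`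
(lca of the species of the leaves below `x`) -/
def spec (S : BTree σ) (s : γ → σ) (t : BTree γ) : BTree σ := specOf S s (leaves t)

/-- the local LCA-reconciliation cost of a node whose own mapping is `su`
and whose children map to `sl` and `sr` -/
def localCost (su sl sr : BTree σ) : ℕ :=
  inter su sl + inter su sr +
    (if su = sl ∧ su = sr then 1 else if su = sl ∨ su = sr then 2 else 0)

/-- number of duplication nodes of the LCA-reconciliation -/
def dupCount (S : BTree σ) (s : γ → σ) : BTree γ → ℕ
  | leaf _ => 0
  | node l r =>
      dupCount S s l + dupCount S s r +
      (if spec S s (node l r) = spec S s l ∨ spec S s (node l r) = spec S s r then 1 else 0)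

/-- minimum number of losses of the LCA-reconciliation: for each edge `(x,c)`,
`inter(s(x), s(c))` losses, plus one more loss for each child `c` of a
duplication node `x` with `s(c) ≠ s(x)` -/
def lossCount (S : BTree σ) (s : γ → σ) : BTree γ → ℕ
  | leaf _ => 0
  | node l r =>
      lossCount S s l + lossCount S s r +
      (if spec S s (node l r) = spec S s l ∨ spec S s (node l r) = spec S s r then
        (inter (spec S s (node l r)) (spec S s l) +
          if spec S s l = spec S s (node l r) then 0 else 1) +
        (inter (spec S s (node l r)) (spec S s r) +
          if spec S s r = spec S s (node l r) then 0 else 1)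
      else
        inter (spec S s (node l r)) (spec S s l) + inter (spec S s (node l r)) (spec S s r))

/-- sum over all internal nodes of the local LCA-reconciliation costs -/
def totalLocal (S : BTree σ) (s : γ → σ) : BTree γ → ℕ
  | leaf _ => 0
  | node l r =>
      totalLocal S s l + totalLocal S s r +
      localCost (spec S s (node l r)) (spec S s l) (spec S s r)

/-- `G` is a supertree for `Gs` : a tree on the union of the leaf sets
(each leaf once) displaying every tree of `Gs` -/
def isSupertree (Gs : List (BTree γ)) (G : BTree γ) : Prop :=
  leaves G = unionLeaves Gs ∧ nodupLeaves G ∧ ∀ Gi ∈ Gs, displays G Gi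

/-- `MinSGT` : minimum LCA-reconciliation cost over all supertrees -/
noncomputable def reconMin (S : BTree σ) (s : γ → σ) (Gs : List (BTree γ)) : ℕ :=
  sInf {c | ∃ G : BTree γ, isSupertree Gs G ∧ totalLocal S s G = c}

/-- restrictions `G_i|_L` of the trees of the list (dropping empty ones) -/
def restrictList (Gs : List (BTree γ)) (L : Finset γ) : List (BTree γ) :=
  Gs.filterMap fun G => restrict G L

/-- the four possible ordered choices for distributing a tree into the two
parts of a bipartition: whole tree left, whole tree right, left subtree
left & right subtree right, left subtree right & right subtree left -/
def pick : BTree α → ℕ → Finset α × Finset α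
  | G, 0 => (leaves G, ∅)
  | G, 1 => (∅, leaves G)
  | node l r, 2 => (leaves l, leaves r)
  | node l r, _ => (leaves r, leaves l)
  | G, _ => (∅, leaves G)

/-- left part produced by a distribution `f` of choices -/
def partsLeft (Gs : List (BTree α)) (f : Fin Gs.length → Fin 4) : Finset α :=
  Finset.univ.biUnion fun i => (pick (Gs.get i) (f i).val).1

/-- right part produced by a distribution `f` of choices -/
def partsRight (Gs : List (BTree α)) (f : Fin Gs.length → Fin 4) : Finset α :=
  Finset.univ.biUnion fun i => (pick (Gs.get i) (f i).val).2

/-- the complete subtree at a position (path from the root) -/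
def subtreeAt : BTree α → List Bool → Option (BTree α)
  | t, [] => some t
  | leaf _, _ :: _ => none
  | node l _, false :: p => subtreeAt l p
  | node _ r, true :: p => subtreeAt r p

/-- the set of positions of internal nodes -/
def internalPos : BTree α → Finset (List Bool)
  | leaf _ => ∅
  | node l r =>
      insert [] ((internalPos l).image (List.cons false) ∪
        (internalPos r).image (List.cons true))

end BTree

/-- labeled gene trees: each internal node carries `true` (Dup) or `false` (Spec) -/
inductive LTree (α : Type) where
  | leaf : α → LTree α
  | node : Bool → LTree α → LTree α → LTree α
deriving DecidableEq

namespace LTree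

variable {α : Type} [DecidableEq α]

def leaves : LTree α → Finset α
  | leaf a => {a}
  | node _ l r => leaves l ∪ leaves r

/-- underlying unlabeled tree -/
def shape : LTree α → BTree α
  | leaf a => BTree.leaf a
  | node _ l r => BTree.node (shape l) (shape r)

/-- the event label of the root (`none` for a leaf) -/
def rootEv : LTree α → Option Bool
  | leaf _ => none
  | node e _ _ => some e

inductive Subtree : LTree α → LTree α → Prop
  | refl (t : LTree α) : Subtree t t
  | left {t l r : LTree α} {e : Bool} : Subtree t l → Subtree t (node e l r)
  | right {t l r : LTree α} {e : Bool} : Subtree t r → Subtree t (node e l r)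

/-- the subtree rooted at the lowest common ancestor of the leaf set `L` -/
def lcaSub : LTree α → Finset α → LTree α
  | leaf a, _ => leaf a
  | node e l r, L =>
      if L ⊆ leaves l then lcaSub l L
      else if L ⊆ leaves r then lcaSub r L
      else node e l r

/-- `G` displays `G'` (topologically, ignoring labels) -/
def displaysL (G G' : LTree α) : Prop := BTree.displays (shape G) (shape G')

/-- `(G, ev_G)` is label-compatible with `(G', ev_{G'})` : every internal
node `x'` of `G'` has the same event label as `lca_G(L(x'))` -/
def labelCompatible (G G' : LTree α) : Prop :=
  ∀ (e : Bool) (l r : LTree α), Subtree (node e l r) G' →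
    rootEv (lcaSub G (leaves (node e l r))) = some e

end LTree
namespace BTree

variable {α : Type} [DecidableEq α] {σ : Type} [DecidableEq σ] {γ : Type} [DecidableEq γ]

theorem leaves_nonempty (t : BTree α) : t.leaves.Nonempty := by
  induction t with
  | leaf a => exact ⟨a, Finset.mem_singleton_self a⟩
  | node l r ihl ihr => obtain ⟨a, ha⟩ := ihl; exact ⟨a, by simp [leaves, ha]⟩

theorem restrict_eq_none {G : BTree α} {L : Finset α} :
    restrict G L = none ↔ Disjoint G.leaves L := by
  induction G with
  | leaf a =>
    by_cases h : a ∈ L <;> simp [restrict, leaves, Finset.disjoint_singleton_left, h]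
  | node l r ihl ihr =>
    cases hl : restrict l L <;> cases hr : restrict r L <;>
      simp_all [restrict, leaves, Finset.disjoint_union_left]

theorem restrict_ne_none {G : BTree α} {L : Finset α} (h : ¬ Disjoint G.leaves L) :
    ∃ t, restrict G L = some t := by
  cases hr : restrict G L with
  | none => exact absurd (restrict_eq_none.mp hr) h
  | some t => exact ⟨t, rfl⟩

theorem leaves_restrict : ∀ {G t : BTree α} {L : Finset α},
    restrict G L = some t → t.leaves = G.leaves ∩ L := by
  intro G
  induction G with
  | leaf a =>
    intro t L h
    by_cases ha : a ∈ L
    · simp only [restrict, if_pos ha, Option.some.injEq] at h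
      subst h
      simp [leaves, Finset.singleton_inter_of_mem ha]
    · simp [restrict, ha] at h
  | node l r ihl ihr =>
    intro t L h
    show t.leaves = (l.leaves ∪ r.leaves) ∩ L
    rw [Finset.union_inter_distrib_right]
    cases hl : restrict l L with
    | none =>
      rw [Finset.disjoint_iff_inter_eq_empty.mp (restrict_eq_none.mp hl), Finset.empty_union]
      cases hr : restrict r L with
      | none => rw [show restrict (node l r) L = none by simp only [restrict, hl, hr]] at h; exact absurd h (by simp)
      | some r' =>
        simp only [restrict, hl, hr, Option.some.injEq] at h
        subst h; exact ihr hr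
    | some l' =>
      cases hr : restrict r L with
      | none =>
        rw [Finset.disjoint_iff_inter_eq_empty.mp (restrict_eq_none.mp hr), Finset.union_empty]
        simp only [restrict, hl, hr, Option.some.injEq] at h
        subst h; exact ihl hl
      | some r' =>
        simp only [restrict, hl, hr, Option.some.injEq] at h
        subst h
        show l'.leaves ∪ r'.leaves = _
        rw [ihl hl, ihr hr]

theorem restrict_congr : ∀ {G : BTree α} {A B : Finset α},
    G.leaves ∩ A = G.leaves ∩ B → restrict G A = restrict G B := by
  intro G
  induction G with
  | leaf a =>
    intro A B h
    have : a ∈ A ↔ a ∈ B := by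
      constructor <;> intro ha
      · have : a ∈ leaves (leaf a) ∩ B := h ▸ Finset.mem_inter.mpr ⟨Finset.mem_singleton_self a, ha⟩
        exact (Finset.mem_inter.mp this).2
      · have : a ∈ leaves (leaf a) ∩ A := h.symm ▸ Finset.mem_inter.mpr ⟨Finset.mem_singleton_self a, ha⟩
        exact (Finset.mem_inter.mp this).2
    simp [restrict, this]
  | node l r ihl ihr =>
    intro A B h
    have hsub : ∀ {s : Finset α}, s ⊆ leaves (node l r) → s ∩ A = s ∩ B := by
      intro s hs
      apply Finset.ext
      intro x
      simp only [Finset.mem_inter]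
      constructor <;> rintro ⟨hx1, hx2⟩
      · have : x ∈ leaves (node l r) ∩ B := h ▸ Finset.mem_inter.mpr ⟨hs hx1, hx2⟩
        exact ⟨hx1, (Finset.mem_inter.mp this).2⟩
      · have : x ∈ leaves (node l r) ∩ A := h.symm ▸ Finset.mem_inter.mpr ⟨hs hx1, hx2⟩
        exact ⟨hx1, (Finset.mem_inter.mp this).2⟩
    have h1 := ihl (hsub (show l.leaves ⊆ l.leaves ∪ r.leaves from Finset.subset_union_left))
    have h2 := ihr (hsub (show r.leaves ⊆ l.leaves ∪ r.leaves from Finset.subset_union_right))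
    show (match restrict l A, restrict r A with
      | some l', some r' => some (node l' r')
      | some l', none => some l'
      | none, some r' => some r'
      | none, none => none) = (match restrict l B, restrict r B with
      | some l', some r' => some (node l' r')
      | some l', none => some l'
      | none, some r' => some r'
      | none, none => none)
    rw [h1, h2]

theorem restrict_of_subset : ∀ {G : BTree α} {L : Finset α},
    G.leaves ⊆ L → restrict G L = some G := by
  intro G
  induction G with
  | leaf a =>
    intro L h
    have : a ∈ L := h (Finset.mem_singleton_self a)
    simp [restrict, this]
  | node l r ihl ihr =>
    intro L h
    have h1 : l.leaves ⊆ L := fun x hx => h (Finset.mem_union_left _ hx)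
    have h2 : r.leaves ⊆ L := fun x hx => h (Finset.mem_union_right _ hx)
    simp only [restrict, ihl h1, ihr h2]

theorem restrict_restrict : ∀ {G t : BTree α} {A B : Finset α},
    restrict G A = some t → restrict t B = restrict G (A ∩ B) := by
  intro G
  induction G with
  | leaf a =>
    intro t A B h
    by_cases ha : a ∈ A
    · simp only [restrict, if_pos ha, Option.some.injEq] at h
      subst h
      by_cases hb : a ∈ B <;> simp [restrict, hb, ha, Finset.mem_inter]
    · simp [restrict, ha] at h
  | node l r ihl ihr =>
    intro t A B h
    cases hl : restrict l A with
    | none =>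
      have hln : restrict l (A ∩ B) = none :=
        restrict_eq_none.mpr ((restrict_eq_none.mp hl).mono_right Finset.inter_subset_left)
      cases hr : restrict r A with
      | none => rw [show restrict (node l r) A = none by simp only [restrict, hl, hr]] at h; exact absurd h (by simp)
      | some r' =>
        simp only [restrict, hl, hr, Option.some.injEq] at h
        subst h
        rw [ihr hr]
        show _ = (match restrict l (A ∩ B), restrict r (A ∩ B) with
          | some l', some r' => some (node l' r')
          | some l', none => some l'
          | none, some r' => some r'
          | none, none => none)
        rw [hln]
        cases restrict r (A ∩ B) <;> rfl
    | some l' =>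
      cases hr : restrict r A with
      | none =>
        have hrn : restrict r (A ∩ B) = none :=
          restrict_eq_none.mpr ((restrict_eq_none.mp hr).mono_right Finset.inter_subset_left)
        simp only [restrict, hl, hr, Option.some.injEq] at h
        subst h
        rw [ihl hl]
        show _ = (match restrict l (A ∩ B), restrict r (A ∩ B) with
          | some l', some r' => some (node l' r')
          | some l', none => some l'
          | none, some r' => some r'
          | none, none => none)
        rw [hrn]
        cases restrict l (A ∩ B) <;> rfl
      | some r' =>
        simp only [restrict, hl, hr, Option.some.injEq] at h
        subst h
        show (match restrict l' B, restrict r' B with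
          | some l', some r' => some (node l' r')
          | some l', none => some l'
          | none, some r' => some r'
          | none, none => none) = (match restrict l (A ∩ B), restrict r (A ∩ B) with
          | some l', some r' => some (node l' r')
          | some l', none => some l'
          | none, some r' => some r'
          | none, none => none)
        rw [ihl hl, ihr hr]

theorem nodup_restrict : ∀ {G t : BTree α} {L : Finset α},
    G.nodupLeaves → restrict G L = some t → t.nodupLeaves := by
  intro G
  induction G with
  | leaf a =>
    intro t L _ h
    by_cases ha : a ∈ L
    · simp only [restrict, if_pos ha, Option.some.injEq] at h
      subst h; trivial
    · simp [restrict, ha] at h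
  | node l r ihl ihr =>
    intro t L hnd h
    obtain ⟨h1, h2, h3⟩ := hnd
    cases hl : restrict l L with
    | none =>
      cases hr : restrict r L with
      | none => rw [show restrict (node l r) L = none by simp only [restrict, hl, hr]] at h; exact absurd h (by simp)
      | some r' =>
        simp only [restrict, hl, hr, Option.some.injEq] at h
        subst h; exact ihr h2 hr
    | some l' =>
      cases hr : restrict r L with
      | none =>
        simp only [restrict, hl, hr, Option.some.injEq] at h
        subst h; exact ihl h1 hl
      | some r' =>
        simp only [restrict, hl, hr, Option.some.injEq] at h
        subst h
        refine ⟨ihl h1 hl, ihr h2 hr, ?_⟩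
        rw [leaves_restrict hl, leaves_restrict hr]
        exact (h3.mono Finset.inter_subset_left Finset.inter_subset_left)

theorem Iso.leaves_eq : ∀ {t t' : BTree α}, Iso t t' → t.leaves = t'.leaves := by
  intro t t' h
  induction h with
  | leaf a => rfl
  | node h1 h2 ih1 ih2 => show _ ∪ _ = _ ∪ _; rw [ih1, ih2]
  | swap h1 h2 ih1 ih2 => show _ ∪ _ = _ ∪ _; rw [ih1, ih2, Finset.union_comm]

theorem Iso.restrict_iso : ∀ {t t' : BTree α}, Iso t t' → ∀ (L : Finset α),
    (restrict t L = none ∧ restrict t' L = none) ∨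
    ∃ u u', restrict t L = some u ∧ restrict t' L = some u' ∧ Iso u u' := by
  intro t t' h
  induction h with
  | leaf a =>
    intro L
    by_cases ha : a ∈ L
    · exact Or.inr ⟨BTree.leaf a, BTree.leaf a, by simp [restrict, ha], by simp [restrict, ha], Iso.leaf a⟩
    · exact Or.inl ⟨by simp [restrict, ha], by simp [restrict, ha]⟩
  | @node l r l' r' h1 h2 ih1 ih2 =>
    intro L
    rcases ih1 L with ⟨e1, e1'⟩ | ⟨u1, u1', h1l, h1r, hiso1⟩ <;>
      rcases ih2 L with ⟨e2, e2'⟩ | ⟨u2, u2', h2l, h2r, hiso2⟩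
    · exact Or.inl ⟨by simp only [restrict, e1, e2], by simp only [restrict, e1', e2']⟩
    · exact Or.inr ⟨u2, u2', by simp only [restrict, e1, h2l], by simp only [restrict, e1', h2r], hiso2⟩
    · exact Or.inr ⟨u1, u1', by simp only [restrict, h1l, e2], by simp only [restrict, h1r, e2'], hiso1⟩
    · exact Or.inr ⟨BTree.node u1 u2, BTree.node u1' u2', by simp only [restrict, h1l, h2l],
        by simp only [restrict, h1r, h2r], Iso.node hiso1 hiso2⟩
  | @swap l r l' r' h1 h2 ih1 ih2 =>
    intro L
    rcases ih1 L with ⟨e1, e1'⟩ | ⟨u1, u1', h1l, h1r, hiso1⟩ <;>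
      rcases ih2 L with ⟨e2, e2'⟩ | ⟨u2, u2', h2l, h2r, hiso2⟩
    · exact Or.inl ⟨by simp only [restrict, e1, e2], by simp only [restrict, e2', e1']⟩
    · exact Or.inr ⟨u2, u2', by simp only [restrict, e1, h2l], by simp only [restrict, h2r, e1'], hiso2⟩
    · exact Or.inr ⟨u1, u1', by simp only [restrict, h1l, e2], by simp only [restrict, e2', h1r], hiso1⟩
    · exact Or.inr ⟨BTree.node u1 u2, BTree.node u2' u1', by simp only [restrict, h1l, h2l],
        by simp only [restrict, h2r, h1r], Iso.swap hiso1 hiso2⟩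

theorem mem_unionLeaves {Gs : List (BTree α)} {x : α} :
    x ∈ unionLeaves Gs ↔ ∃ G ∈ Gs, x ∈ G.leaves := by
  induction Gs with
  | nil => simp [unionLeaves]
  | cons G Gs ih =>
    show x ∈ G.leaves ∪ unionLeaves Gs ↔ _
    simp [Finset.mem_union, ih]

theorem mem_restrictList {Gs : List (BTree α)} {L : Finset α} {t : BTree α} :
    t ∈ restrictList Gs L ↔ ∃ G ∈ Gs, restrict G L = some t :=
  List.mem_filterMap

theorem unionLeaves_restrictList {Gs : List (BTree α)} {L : Finset α} :
    unionLeaves (restrictList Gs L) = unionLeaves Gs ∩ L := by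
  induction Gs with
  | nil => simp [unionLeaves, restrictList]
  | cons G Gs ih =>
    show unionLeaves (List.filterMap _ (G :: Gs)) = (G.leaves ∪ unionLeaves Gs) ∩ L
    rw [List.filterMap_cons, Finset.union_inter_distrib_right]
    cases hG : restrict G L with
    | none =>
      rw [Finset.disjoint_iff_inter_eq_empty.mp (restrict_eq_none.mp hG), Finset.empty_union]
      exact ih
    | some t =>
      show t.leaves ∪ unionLeaves (restrictList Gs L) = _
      rw [leaves_restrict hG, ih]

theorem supertree_restrict {Gs : List (BTree γ)} {G t : BTree γ} {L : Finset γ}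
    (hG : isSupertree Gs G) (ht : restrict G L = some t) :
    isSupertree (restrictList Gs L) t := by
  obtain ⟨hleaves, hnd, hdisp⟩ := hG
  refine ⟨?_, nodup_restrict hnd ht, ?_⟩
  · rw [leaves_restrict ht, hleaves, unionLeaves_restrictList]
  · intro gi hgi
    obtain ⟨Gi, hGi, hres⟩ := mem_restrictList.mp hgi
    obtain ⟨u, hu, hiso⟩ := hdisp Gi hGi
    have hlgi : gi.leaves = Gi.leaves ∩ L := leaves_restrict hres
    have h1 : restrict t gi.leaves = restrict G (L ∩ gi.leaves) := restrict_restrict ht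
    have h2 : restrict G (Gi.leaves ∩ L) = restrict u L := (restrict_restrict hu).symm
    have heq : L ∩ gi.leaves = Gi.leaves ∩ L := by
      rw [hlgi]
      ext x
      simp only [Finset.mem_inter]
      tauto
    rcases hiso.restrict_iso L with ⟨_, hn⟩ | ⟨w, w', hw, hw', hwiso⟩
    · rw [hres] at hn; exact absurd hn (by simp)
    · rw [hres] at hw'
      obtain rfl : gi = w' := Option.some_inj.mp hw'
      exact ⟨w, by rw [h1, heq, h2, hw], hwiso⟩

theorem displays_node_left {Gl Gr Gi : BTree γ} (hd : Disjoint Gr.leaves Gi.leaves)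
    (h : displays Gl Gi) : displays (node Gl Gr) Gi := by
  obtain ⟨u, hu, hiso⟩ := h
  refine ⟨u, ?_, hiso⟩
  have hn : restrict Gr Gi.leaves = none := restrict_eq_none.mpr hd
  simp only [restrict, hu, hn]

theorem displays_node_right {Gl Gr Gi : BTree γ} (hd : Disjoint Gl.leaves Gi.leaves)
    (h : displays Gr Gi) : displays (node Gl Gr) Gi := by
  obtain ⟨u, hu, hiso⟩ := h
  refine ⟨u, ?_, hiso⟩
  have hn : restrict Gl Gi.leaves = none := restrict_eq_none.mpr hd
  simp only [restrict, hu, hn]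

theorem displays_node_split {Gl Gr gl gr : BTree γ}
    (h1 : displays Gl gl) (h2 : displays Gr gr)
    (d1 : Disjoint Gl.leaves gr.leaves) (d2 : Disjoint Gr.leaves gl.leaves) :
    displays (node Gl Gr) (node gl gr) := by
  obtain ⟨u1, hu1, hiso1⟩ := h1
  obtain ⟨u2, hu2, hiso2⟩ := h2
  have e1 : restrict Gl (leaves (node gl gr)) = some u1 := by
    rw [restrict_congr (A := leaves (node gl gr)) (B := gl.leaves), hu1]
    show Gl.leaves ∩ (gl.leaves ∪ gr.leaves) = _
    rw [Finset.inter_union_distrib_left, Finset.disjoint_iff_inter_eq_empty.mp d1,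
      Finset.union_empty]
  have e2 : restrict Gr (leaves (node gl gr)) = some u2 := by
    rw [restrict_congr (A := leaves (node gl gr)) (B := gr.leaves), hu2]
    show Gr.leaves ∩ (gl.leaves ∪ gr.leaves) = _
    rw [Finset.inter_union_distrib_left, Finset.disjoint_iff_inter_eq_empty.mp d2,
      Finset.empty_union]
  exact ⟨node u1 u2, by simp only [restrict, e1, e2], Iso.node hiso1 hiso2⟩

theorem displays_node_swap {Gl Gr gl gr : BTree γ}
    (h1 : displays Gl gr) (h2 : displays Gr gl)
    (d1 : Disjoint Gl.leaves gl.leaves) (d2 : Disjoint Gr.leaves gr.leaves) :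
    displays (node Gl Gr) (node gl gr) := by
  obtain ⟨u1, hu1, hiso1⟩ := h1
  obtain ⟨u2, hu2, hiso2⟩ := h2
  have e1 : restrict Gl (leaves (node gl gr)) = some u1 := by
    rw [restrict_congr (A := leaves (node gl gr)) (B := gr.leaves), hu1]
    show Gl.leaves ∩ (gl.leaves ∪ gr.leaves) = _
    rw [Finset.inter_union_distrib_left, Finset.disjoint_iff_inter_eq_empty.mp d1,
      Finset.empty_union]
  have e2 : restrict Gr (leaves (node gl gr)) = some u2 := by
    rw [restrict_congr (A := leaves (node gl gr)) (B := gl.leaves), hu2]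
    show Gr.leaves ∩ (gl.leaves ∪ gr.leaves) = _
    rw [Finset.inter_union_distrib_left, Finset.disjoint_iff_inter_eq_empty.mp d2,
      Finset.union_empty]
  exact ⟨node u1 u2, by simp only [restrict, e1, e2], Iso.swap hiso1 hiso2⟩

theorem leaves_of_supertree_restrict {Gs : List (BTree γ)} {L J : Finset γ} {Gl : BTree γ}
    (hun : L ∪ J = unionLeaves Gs)
    (hl : isSupertree (restrictList Gs L) Gl) : Gl.leaves = L := by
  rw [hl.1, unionLeaves_restrictList, ← hun]
  exact Finset.inter_eq_right.mpr Finset.subset_union_left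

theorem supertree_node {Gs : List (BTree γ)} {Ll Lr : Finset γ} {Gl Gr : BTree γ}
    (hbip : isCompBip Gs Ll Lr)
    (hl : isSupertree (restrictList Gs Ll) Gl) (hr : isSupertree (restrictList Gs Lr) Gr) :
    isSupertree Gs (node Gl Gr) := by
  obtain ⟨hun, hdisj, hlne, hrne, hcomp⟩ := hbip
  have hLl : Gl.leaves = Ll := leaves_of_supertree_restrict hun hl
  have hLr : Gr.leaves = Lr := leaves_of_supertree_restrict (by rw [Finset.union_comm]; exact hun) hr
  refine ⟨?_, ⟨hl.2.1, hr.2.1, by rw [hLl, hLr]; exact hdisj⟩, ?_⟩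
  · show Gl.leaves ∪ Gr.leaves = _
    rw [hLl, hLr, hun]
  · intro Gi hGi
    have hc := hcomp Gi hGi
    cases Gi with
    | leaf a =>
      rcases hc with ha | ha
      · refine displays_node_left ?_ (hl.2.2 _ (mem_restrictList.mpr ⟨leaf a, hGi, by simp [restrict, ha]⟩))
        rw [hLr]
        show Disjoint Lr {a}
        exact Finset.disjoint_singleton_right.mpr (Finset.disjoint_left.mp hdisj ha)
      · refine displays_node_right ?_ (hr.2.2 _ (mem_restrictList.mpr ⟨leaf a, hGi, by simp [restrict, ha]⟩))
        rw [hLl]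
        show Disjoint Ll {a}
        exact Finset.disjoint_singleton_right.mpr (Finset.disjoint_right.mp hdisj ha)
    | node gl gr =>
      rcases hc with hsub | hsub | ⟨hsl, hsr⟩ | ⟨hsl, hsr⟩
      · refine displays_node_left ?_ (hl.2.2 _ (mem_restrictList.mpr ⟨node gl gr, hGi, restrict_of_subset hsub⟩))
        rw [hLr]
        exact (hdisj.symm.mono_right hsub)
      · refine displays_node_right ?_ (hr.2.2 _ (mem_restrictList.mpr ⟨node gl gr, hGi, restrict_of_subset hsub⟩))
        rw [hLl]
        exact (hdisj.mono_right hsub)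
      · -- gl → Ll, gr → Lr
        have hresl : restrict (node gl gr) Ll = some gl := by
          have hno : restrict gr Ll = none :=
            restrict_eq_none.mpr (hdisj.symm.mono_left hsr)
          simp only [restrict, restrict_of_subset hsl, hno]
        have hresr : restrict (node gl gr) Lr = some gr := by
          have hno : restrict gl Lr = none :=
            restrict_eq_none.mpr (hdisj.mono_left hsl)
          simp only [restrict, hno, restrict_of_subset hsr]
        refine displays_node_split
          (hl.2.2 _ (mem_restrictList.mpr ⟨node gl gr, hGi, hresl⟩))
          (hr.2.2 _ (mem_restrictList.mpr ⟨node gl gr, hGi, hresr⟩)) ?_ ?_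
        · rw [hLl]; exact hdisj.mono_right hsr
        · rw [hLr]; exact hdisj.symm.mono_right hsl
      · -- gl → Lr, gr → Ll
        have hresl : restrict (node gl gr) Ll = some gr := by
          have hno : restrict gl Ll = none :=
            restrict_eq_none.mpr (hdisj.symm.mono_left hsl)
          simp only [restrict, hno, restrict_of_subset hsr]
        have hresr : restrict (node gl gr) Lr = some gl := by
          have hno : restrict gr Lr = none :=
            restrict_eq_none.mpr (hdisj.mono_left hsr)
          simp only [restrict, restrict_of_subset hsl, hno]
        refine displays_node_swap
          (hl.2.2 _ (mem_restrictList.mpr ⟨node gl gr, hGi, hresl⟩))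
          (hr.2.2 _ (mem_restrictList.mpr ⟨node gl gr, hGi, hresr⟩)) ?_ ?_
        · rw [hLl]; exact hdisj.mono_right hsl
        · rw [hLr]; exact hdisj.symm.mono_right hsr

theorem compBip_of_supertree {Gs : List (BTree γ)} {l r : BTree γ}
    (h : isSupertree Gs (node l r)) : isCompBip Gs l.leaves r.leaves := by
  obtain ⟨hleaves, ⟨hndl, hndr, hdisj⟩, hdisp⟩ := h
  refine ⟨hleaves, hdisj, leaves_nonempty l, leaves_nonempty r, ?_⟩
  intro Gi hGi
  have hsub : Gi.leaves ⊆ l.leaves ∪ r.leaves := by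
    rw [show l.leaves ∪ r.leaves = leaves (node l r) from rfl, hleaves]
    intro x hx
    exact mem_unionLeaves.mpr ⟨Gi, hGi, hx⟩
  cases Gi with
  | leaf a =>
    have := hsub (Finset.mem_singleton_self a)
    exact Finset.mem_union.mp this
  | node gl gr =>
    by_cases hL : leaves (node gl gr) ⊆ l.leaves
    · exact Or.inl hL
    by_cases hR : leaves (node gl gr) ⊆ r.leaves
    · exact Or.inr (Or.inl hR)
    refine Or.inr (Or.inr ?_)
    obtain ⟨u, hu, hiso⟩ := hdisp _ hGi
    have hnl : ¬ Disjoint l.leaves (leaves (node gl gr)) := by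
      intro hd
      apply hR
      intro x hx
      rcases Finset.mem_union.mp (hsub hx) with h1 | h1
      · exact absurd hx (Finset.disjoint_left.mp hd h1)
      · exact h1
    have hnr : ¬ Disjoint r.leaves (leaves (node gl gr)) := by
      intro hd
      apply hL
      intro x hx
      rcases Finset.mem_union.mp (hsub hx) with h1 | h1
      · exact h1
      · exact absurd hx (Finset.disjoint_left.mp hd h1)
    obtain ⟨t1, ht1⟩ := restrict_ne_none hnl
    obtain ⟨t2, ht2⟩ := restrict_ne_none hnr
    have hu' : u = node t1 t2 := by
      simp only [restrict, ht1, ht2, Option.some.injEq] at hu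
      exact hu.symm
    subst hu'
    have hl1 : t1.leaves ⊆ l.leaves := by rw [leaves_restrict ht1]; exact Finset.inter_subset_left
    have hl2 : t2.leaves ⊆ r.leaves := by rw [leaves_restrict ht2]; exact Finset.inter_subset_left
    cases hiso with
    | node h1 h2 =>
      exact Or.inl ⟨h1.leaves_eq ▸ hl1, h2.leaves_eq ▸ hl2⟩
    | swap h1 h2 =>
      exact Or.inr ⟨h2.leaves_eq ▸ hl2, h1.leaves_eq ▸ hl1⟩

theorem exists_min_supertree (S : BTree σ) (s : γ → σ) {Gs : List (BTree γ)}
    (h : ∃ G, isSupertree Gs G) :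
    ∃ G, isSupertree Gs G ∧ totalLocal S s G = reconMin S s Gs := by
  have hne : {c | ∃ G : BTree γ, isSupertree Gs G ∧ totalLocal S s G = c}.Nonempty :=
    ⟨totalLocal S s h.choose, h.choose, h.choose_spec, rfl⟩
  exact Nat.sInf_mem hne

theorem reconMin_le (S : BTree σ) (s : γ → σ) {Gs : List (BTree γ)} {G : BTree γ}
    (h : isSupertree Gs G) : reconMin S s Gs ≤ totalLocal S s G :=
  Nat.sInf_le ⟨G, h, rfl⟩

end BTree

/-- the `MinSGT` recurrence: for `|Γ| > 1` the minimum
reconciliation cost over supertrees is the minimum over compatible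
bipartitions of the local cost plus the optimal costs of the two
restricted instances. -/
theorem stmt14 {σ γ : Type} [DecidableEq σ] [DecidableEq γ]
    (S : BTree σ) (s : γ → σ) (Gs : List (BTree γ))
    (hndS : S.nodupLeaves)
    (hs : ∀ G ∈ Gs, ∀ g ∈ G.leaves, s g ∈ S.leaves)
    (hcons : ∃ G : BTree γ, BTree.isSupertree Gs G)
    (hΓ : 1 < (BTree.unionLeaves Gs).card) :
    BTree.reconMin S s Gs =
      sInf {c | ∃ Ll Lr : Finset γ, BTree.isCompBip Gs Ll Lr ∧
        c = BTree.localCost (BTree.specOf S s (Ll ∪ Lr)) (BTree.specOf S s Ll)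
              (BTree.specOf S s Lr) +
            BTree.reconMin S s (BTree.restrictList Gs Ll) +
            BTree.reconMin S s (BTree.restrictList Gs Lr)} := by
  classical
  open BTree in
  obtain ⟨G0, hG0, hc0⟩ := exists_min_supertree S s hcons
  obtain ⟨l, r, rfl⟩ : ∃ l r, G0 = BTree.node l r := by
    cases G0 with
    | leaf a =>
      exfalso
      have h1 := hG0.1
      rw [← h1] at hΓ
      simp [BTree.leaves] at hΓ
    | node l r => exact ⟨l, r, rfl⟩
  have hbip := BTree.compBip_of_supertree hG0
  have hndG := hG0.2.1
  have hresl : BTree.restrict (BTree.node l r) l.leaves = some l := by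
    have h1 : BTree.restrict l l.leaves = some l := BTree.restrict_of_subset (le_refl _)
    have h2 : BTree.restrict r l.leaves = none := BTree.restrict_eq_none.mpr hndG.2.2.symm
    simp only [BTree.restrict, h1, h2]
  have hresr : BTree.restrict (BTree.node l r) r.leaves = some r := by
    have h1 : BTree.restrict r r.leaves = some r := BTree.restrict_of_subset (le_refl _)
    have h2 : BTree.restrict l r.leaves = none := BTree.restrict_eq_none.mpr hndG.2.2
    simp only [BTree.restrict, h1, h2]
  have hl : BTree.isSupertree (BTree.restrictList Gs l.leaves) l :=
    BTree.supertree_restrict hG0 hresl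
  have hr : BTree.isSupertree (BTree.restrictList Gs r.leaves) r :=
    BTree.supertree_restrict hG0 hresr
  have hmem : (BTree.localCost (BTree.specOf S s (l.leaves ∪ r.leaves))
      (BTree.specOf S s l.leaves) (BTree.specOf S s r.leaves) +
      BTree.reconMin S s (BTree.restrictList Gs l.leaves) +
      BTree.reconMin S s (BTree.restrictList Gs r.leaves)) ∈
      {c | ∃ Ll Lr : Finset γ, BTree.isCompBip Gs Ll Lr ∧
        c = BTree.localCost (BTree.specOf S s (Ll ∪ Lr)) (BTree.specOf S s Ll)
              (BTree.specOf S s Lr) +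
            BTree.reconMin S s (BTree.restrictList Gs Ll) +
            BTree.reconMin S s (BTree.restrictList Gs Lr)} :=
    ⟨l.leaves, r.leaves, hbip, rfl⟩
  apply le_antisymm
  · -- reconMin ≤ sInf
    obtain ⟨Ll, Lr, hb, hv⟩ := Nat.sInf_mem (⟨_, hmem⟩ : Set.Nonempty _)
    rw [hv]
    -- restricted instances are consistent
    have hLlsub : Ll ⊆ (BTree.node l r).leaves := by
      rw [hG0.1, ← hb.1]; exact Finset.subset_union_left
    have hLrsub : Lr ⊆ (BTree.node l r).leaves := by
      rw [hG0.1, ← hb.1]; exact Finset.subset_union_right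
    have hndl : ¬ Disjoint (BTree.node l r).leaves Ll := by
      obtain ⟨x, hx⟩ := hb.2.2.1
      exact fun hd => absurd hx (Finset.disjoint_left.mp hd (hLlsub hx))
    have hndr : ¬ Disjoint (BTree.node l r).leaves Lr := by
      obtain ⟨x, hx⟩ := hb.2.2.2.1
      exact fun hd => absurd hx (Finset.disjoint_left.mp hd (hLrsub hx))
    obtain ⟨tl, htl⟩ := BTree.restrict_ne_none hndl
    obtain ⟨tr, htr⟩ := BTree.restrict_ne_none hndr
    obtain ⟨Gl, hGl, hGlc⟩ :=
      BTree.exists_min_supertree S s ⟨tl, BTree.supertree_restrict hG0 htl⟩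
    obtain ⟨Gr, hGr, hGrc⟩ :=
      BTree.exists_min_supertree S s ⟨tr, BTree.supertree_restrict hG0 htr⟩
    have hsup := BTree.supertree_node hb hGl hGr
    have hLl : Gl.leaves = Ll := BTree.leaves_of_supertree_restrict hb.1 hGl
    have hLr : Gr.leaves = Lr :=
      BTree.leaves_of_supertree_restrict (by rw [Finset.union_comm]; exact hb.1) hGr
    have hdec : BTree.totalLocal S s (BTree.node Gl Gr) =
        BTree.localCost (BTree.specOf S s (Ll ∪ Lr)) (BTree.specOf S s Ll)
          (BTree.specOf S s Lr) +
        BTree.totalLocal S s Gl + BTree.totalLocal S s Gr := by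
      show BTree.totalLocal S s Gl + BTree.totalLocal S s Gr +
        BTree.localCost (BTree.specOf S s (Gl.leaves ∪ Gr.leaves))
          (BTree.specOf S s Gl.leaves) (BTree.specOf S s Gr.leaves) = _
      rw [hLl, hLr]
      omega
    calc BTree.reconMin S s Gs ≤ BTree.totalLocal S s (BTree.node Gl Gr) :=
          BTree.reconMin_le S s hsup
      _ = _ := by rw [hdec, hGlc, hGrc]
  · -- sInf ≤ reconMin
    refine le_trans (Nat.sInf_le hmem) ?_
    rw [← hc0]
    have hdec : BTree.totalLocal S s (BTree.node l r) =
        BTree.localCost (BTree.specOf S s (l.leaves ∪ r.leaves))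
          (BTree.specOf S s l.leaves) (BTree.specOf S s r.leaves) +
        BTree.totalLocal S s l + BTree.totalLocal S s r := by
      show BTree.totalLocal S s l + BTree.totalLocal S s r +
        BTree.localCost (BTree.specOf S s (l.leaves ∪ r.leaves))
          (BTree.specOf S s l.leaves) (BTree.specOf S s r.leaves) = _
      omega
    rw [hdec]
    have h1 := BTree.reconMin_le S s hl
    have h2 := BTree.reconMin_le S s hr
    omega
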